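/- For all k ≥ 0, the maximum value of s(n) over n in the interval [4^k, 4^(k+1) − 1] is 2^(k+2) − 1, attained only at n = (2/3)(2^(2k+2) − 1). -/

import Mathlib

def rs : ℕ → ℤ
  | 0 => 1
  | (n+1) =>
    if (n+1) % 2 = 0 then rs ((n+1)/2)
    else (-1)^((n+1)/2) * rs ((n+1)/2)
decreasing_by all_goals exact Nat.div_lt_self (Nat.succ_pos n) (by norm_num)

def s (n : ℕ) : ℤ := ∑ i ∈ Finset.range (n+1), rs i

def t (n : ℕ) : ℤ := ∑ i ∈ Finset.range (n+1), (-1)^i * rs i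

/-!
Summing `rs` over blocks of four, `rs (4i) + rs (4i+1) + rs (4i+2) + rs (4i+3) = 2 rs i`, gives
`s (4p + r) = 2 s p + c` with `c = -rs p, 0, rs (2p+1), 0` for `r = 0, 1, 2, 3`.
So passing from `[4^k, 4^(k+1))` to the next block the maximum `m` becomes `2m + 1`,
attained only at `4q + 2` where `q` is the previous maximiser, provided `rs q = rs (2q+1) = 1`.
That proviso propagates from `q` to `4q + 2`, since `rs (4q+2)` and `rs (2 (4q+2) + 1)` both
equal `rs (2q+1)`.
-/

theorem rs_zero : rs 0 = 1 := by
  rw [rs]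

theorem rs_two_mul (n : ℕ) : rs (2 * n) = rs n := by
  cases n with
  | zero => rfl
  | succ m =>
    rw [show 2 * (m + 1) = (2 * m + 1) + 1 by ring, rs, if_pos (by omega)]
    congr 1
    omega

theorem rs_two_mul_add_one (n : ℕ) : rs (2 * n + 1) = (-1) ^ n * rs n := by
  rw [rs, if_neg (by omega), show (2 * n + 1) / 2 = n by omega]

theorem rs_one : rs 1 = 1 := by
  simpa [rs_zero] using rs_two_mul_add_one 0

theorem rs_eq_one_or_eq_neg_one (n : ℕ) : rs n = 1 ∨ rs n = -1 := by
  induction n using Nat.strong_induction_on with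
  | _ n ih =>
    obtain ⟨m, rfl | rfl⟩ := Nat.even_or_odd' n
    · rcases m.eq_zero_or_pos with rfl | hm
      · exact .inl rs_zero
      · rw [rs_two_mul]
        exact ih m (by omega)
    · rw [rs_two_mul_add_one]
      rcases neg_one_pow_eq_or ℤ m with h | h <;>
        rcases ih m (by omega) with h' | h' <;> simp [h, h']

theorem rs_four_mul (i : ℕ) : rs (4 * i) = rs i := by
  rw [show 4 * i = 2 * (2 * i) by ring, rs_two_mul, rs_two_mul]

theorem rs_four_mul_add_one (i : ℕ) : rs (4 * i + 1) = rs i := by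
  rw [show 4 * i + 1 = 2 * (2 * i) + 1 by ring, rs_two_mul_add_one, pow_mul, rs_two_mul]
  simp

theorem rs_four_mul_add_two (i : ℕ) : rs (4 * i + 2) = rs (2 * i + 1) := by
  rw [show 4 * i + 2 = 2 * (2 * i + 1) by ring, rs_two_mul]

theorem rs_four_mul_add_three (i : ℕ) : rs (4 * i + 3) = -rs (2 * i + 1) := by
  rw [show 4 * i + 3 = 2 * (2 * i + 1) + 1 by ring, rs_two_mul_add_one, pow_succ, pow_mul]
  simp

theorem s_zero : s 0 = 1 := by
  simp [s, rs_zero]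

theorem s_succ (n : ℕ) : s (n + 1) = s n + rs (n + 1) :=
  Finset.sum_range_succ _ _

theorem s_four_mul_add_three (p : ℕ) : s (4 * p + 3) = 2 * s p := by
  have block (i : ℕ) :
      rs (4 * i) + rs (4 * i + 1) + rs (4 * i + 2) + rs (4 * i + 3) = 2 * rs i := by
    rw [rs_four_mul, rs_four_mul_add_one, rs_four_mul_add_two, rs_four_mul_add_three]
    ring
  induction p with
  | zero =>
    simp only [s, Finset.sum_range_succ, Finset.sum_range_zero]
    linarith [block 0]
  | succ p ih =>
    have := block (p + 1)
    rw [show 4 * (p + 1) + 3 = 4 * p + 3 + 1 + 1 + 1 + 1 by ring,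
      s_succ, s_succ, s_succ, s_succ, ih, s_succ]
    ring_nf at this ⊢
    linarith

theorem s_four_mul_add_two (p : ℕ) : s (4 * p + 2) = 2 * s p + rs (2 * p + 1) := by
  have := s_succ (4 * p + 2)
  rw [s_four_mul_add_three, rs_four_mul_add_three] at this
  linarith

theorem s_four_mul_add_one (p : ℕ) : s (4 * p + 1) = 2 * s p := by
  have := s_succ (4 * p + 1)
  rw [s_four_mul_add_two, rs_four_mul_add_two] at this
  linarith

theorem s_four_mul (p : ℕ) : s (4 * p) = 2 * s p - rs p := by
  have := s_succ (4 * p)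
  rw [s_four_mul_add_one, rs_four_mul_add_one] at this
  linarith

theorem s_four_mul_add_le_and_eq_iff {m : ℤ} {p q : ℕ} (hq : rs q = 1) (hq' : rs (2 * q + 1) = 1)
    (hle : s p ≤ m) (heq : s p = m ↔ p = q) {r : ℕ} (hr : r < 4) :
    s (4 * p + r) ≤ 2 * m + 1 ∧ (s (4 * p + r) = 2 * m + 1 ↔ 4 * p + r = 4 * q + 2) := by
  obtain ⟨rfl, hs⟩ | ⟨hpq, hs⟩ : (p = q ∧ s p = m) ∨ (p ≠ q ∧ s p + 1 ≤ m) := by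
    rcases eq_or_ne p q with rfl | hpq
    · exact .inl ⟨rfl, heq.2 rfl⟩
    · exact .inr ⟨hpq, by have := mt heq.1 hpq; omega⟩
  all_goals
    have := rs_eq_one_or_eq_neg_one p
    have := rs_eq_one_or_eq_neg_one (2 * p + 1)
    interval_cases r <;>
      simp only [Nat.add_zero, s_four_mul, s_four_mul_add_one, s_four_mul_add_two,
        s_four_mul_add_three, iff_true] <;> omega

def peak (k : ℕ) : ℕ := 2 * (4 ^ (k + 1) - 1) / 3

theorem peak_zero : peak 0 = 2 := rfl

theorem peak_succ (k : ℕ) : peak (k + 1) = 4 * peak k + 2 := by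
  have h : 4 ^ (k + 1) % 3 = 1 := by rw [Nat.pow_mod]; simp
  have h1 : 1 ≤ 4 ^ (k + 1) := Nat.one_le_pow _ _ (by norm_num)
  rw [peak, peak, pow_succ 4 (k + 1)]
  omega

theorem rs_peak (k : ℕ) : rs (peak k) = 1 ∧ rs (2 * peak k + 1) = 1 := by
  induction k with
  | zero =>
    rw [peak_zero]
    exact ⟨by simpa [rs_one] using rs_four_mul_add_two 0,
      by simpa [rs_one] using rs_four_mul_add_one 1⟩
  | succ k ih =>
    rw [peak_succ, show 2 * (4 * peak k + 2) + 1 = 4 * (2 * peak k + 1) + 1 by ring,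
      rs_four_mul_add_two, rs_four_mul_add_one]
    exact ⟨ih.2, ih.2⟩

theorem s_le_and_eq_iff_eq_peak {k n : ℕ} (h₁ : 4 ^ k ≤ n) (h₂ : n < 4 ^ (k + 1)) :
    s n ≤ 2 ^ (k + 2) - 1 ∧ (s n = 2 ^ (k + 2) - 1 ↔ n = peak k) := by
  induction k generalizing n with
  | zero =>
    have := s_four_mul_add_le_and_eq_iff (m := 1) (p := 0) (q := 0) rs_zero (by simpa using rs_one)
      s_zero.le (by simp [s_zero]) (Nat.mod_lt n four_pos)
    rw [show 4 * 0 + n % 4 = n by omega] at this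
    norm_num [peak_zero] at this ⊢
    exact this
  | succ k ih =>
    rw [pow_succ] at h₁ h₂
    obtain ⟨hle, heq⟩ := ih (n := n / 4) (by omega) (by omega)
    have := s_four_mul_add_le_and_eq_iff (rs_peak k).1 (rs_peak k).2 hle heq (Nat.mod_lt n four_pos)
    rw [Nat.div_add_mod, ← peak_succ] at this
    rw [show (2 : ℤ) ^ (k + 1 + 2) - 1 = 2 * (2 ^ (k + 2) - 1) + 1 by ring]
    exact this

theorem stmt12 : ∀ k : ℕ,
    (∀ n : ℕ, 4^k ≤ n → n ≤ 4^(k+1) - 1 → s n ≤ 2^(k+2) - 1) ∧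
    (∀ n : ℕ, 4^k ≤ n → n ≤ 4^(k+1) - 1 →
      (s n = 2^(k+2) - 1 ↔ n = 2 * (2^(2*k+2) - 1) / 3)) := by
  intro k
  have hpeak : 2 * (2 ^ (2 * k + 2) - 1) / 3 = peak k := by
    rw [peak, show 2 * k + 2 = 2 * (k + 1) by ring, pow_mul]
    norm_num
  have hlt {n : ℕ} (h : n ≤ 4 ^ (k + 1) - 1) : n < 4 ^ (k + 1) := by
    have := Nat.one_le_pow (k + 1) 4 (by norm_num)
    omega
  rw [hpeak]
  exact ⟨fun n h₁ h₂ => (s_le_and_eq_iff_eq_peak h₁ (hlt h₂)).1,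
    fun n h₁ h₂ => (s_le_and_eq_iff_eq_peak h₁ (hlt h₂)).2⟩
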